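/- arXiv:2603.16332 — 2 statements merged into one kernel-verified Lean document; each statement's English description precedes it below -/
import Mathlib

section
/- Let m ≥ 2 and S ⊆ ℤ^m be a finite set. For a prime p let s(p) = |π_p(S)| be the number of distinct residue classes of S mod p. Then the natural upper density of V(S) along cubes [−L,L]^m is at most ∏_{p ≤ P} (1 − s(p)/p^m) for every bound P; i.e., limsup_{L→∞} |V(S) ∩ [−L,L]^m| / (2L)^m ≤ ∏_{p prime, p ≤ P} (1 − s(p)/p^m). -/
/-!
Every `z ∈ V(S)` avoids `π_p(S)` modulo each prime `p`: if `z ≡ x (mod p)` for some `x ∈ S`, then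
`p` divides every coordinate of `z - x`, hence their gcd. So modulo `Q = ∏_{p ≤ P} p` the points
of `V(S)` lie in a set of residue classes which, by the Chinese remainder theorem, has
`∏_{p ≤ P} (p^m - s(p))` elements. Each class meets the cube `[-L, L]^m` in at most
`(2L/Q + 1)^m` points, so the upper density is at most `∏_{p ≤ P} (p^m - s(p)) / Q^m`.
-/

open scoped Classical

open Finset Filter Topology

theorem card_Icc_filter_intCast_eq_le (Q : ℕ) (a b : ℤ) (c : ZMod Q) :
    #{x ∈ Icc a b | ((x : ℤ) : ZMod Q) = c} ≤ (b - a).toNat / Q + 1 := by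
  rw [← card_range ((b - a).toNat / Q + 1)]
  refine card_le_card_of_injOn (fun x => (x - a).toNat / Q) (fun x hx => ?_) fun x hx y hy h => ?_
  · simp only [coe_filter, mem_Icc, Set.mem_ofPred_eq] at hx
    have hxb : (x - a).toNat ≤ (b - a).toNat := by omega
    simpa [Nat.lt_succ_iff] using Nat.div_le_div_right (c := Q) hxb
  · simp only [coe_filter, mem_Icc, Set.mem_ofPred_eq] at hx hy
    have hx' : ((x - a).toNat : ℤ) = x - a := Int.toNat_of_nonneg (by omega)
    have hy' : ((y - a).toNat : ℤ) = y - a := Int.toNat_of_nonneg (by omega)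
    have hmod : (x - a).toNat % Q = (y - a).toNat % Q := by
      rw [← ZMod.natCast_eq_natCast_iff', ← Int.cast_natCast, hx', ← Int.cast_natCast, hy']
      push_cast
      rw [hx.2, hy.2]
    have hdiv : (x - a).toNat / Q = (y - a).toNat / Q := h
    have : (x - a).toNat = (y - a).toNat := by
      rw [← Nat.div_add_mod (x - a).toNat Q, ← Nat.div_add_mod (y - a).toNat Q, hdiv, hmod]
    omega

theorem card_cube_le_of_residues_mem {m Q : ℕ} [NeZero Q] (A : Finset (Fin m → ZMod Q))
    (P : (Fin m → ℤ) → Prop) (hP : ∀ z, P z → (fun i => (z i : ZMod Q)) ∈ A) (L : ℕ) :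
    Nat.card {z : Fin m → ℤ // (∀ i, |z i| ≤ (L : ℤ)) ∧ P z} ≤ #A * (2 * L / Q + 1) ^ m := by
  set cube := Fintype.piFinset fun _ : Fin m => Icc (-(L : ℤ)) L
  have hcard : Nat.card {z : Fin m → ℤ // (∀ i, |z i| ≤ (L : ℤ)) ∧ P z} = #{z ∈ cube | P z} := by
    rw [← Nat.card_eq_finsetCard]
    exact Nat.card_congr (Equiv.subtypeEquivRight fun z => by simp [cube, abs_le])
  rw [hcard, mul_comm]
  refine card_le_mul_card_image_of_maps_to (fun z hz => hP z (mem_filter.1 hz).2) _ fun b _ => ?_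
  calc #{z ∈ {z ∈ cube | P z} | (fun i => (z i : ZMod Q)) = b}
      ≤ #(Fintype.piFinset fun i => {x ∈ Icc (-(L : ℤ)) L | ((x : ℤ) : ZMod Q) = b i}) :=
        card_le_card fun z hz => by
          simp only [mem_filter, cube, Fintype.mem_piFinset] at hz ⊢
          exact fun i => ⟨hz.1.1 i, congrFun hz.2 i⟩
    _ = ∏ i, #{x ∈ Icc (-(L : ℤ)) L | ((x : ℤ) : ZMod Q) = b i} := Fintype.card_piFinset _
    _ ≤ ∏ _i : Fin m, (2 * L / Q + 1) := prod_le_prod' fun i _ =>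
        (card_Icc_filter_intCast_eq_le Q _ _ (b i)).trans_eq (by congr 2; omega)
    _ = (2 * L / Q + 1) ^ m := by simp

theorem limsup_card_cube_div_le_of_residues_mem {m Q : ℕ} [NeZero Q]
    (A : Finset (Fin m → ZMod Q)) (P : (Fin m → ℤ) → Prop)
    (hP : ∀ z, P z → (fun i => (z i : ZMod Q)) ∈ A) :
    limsup (fun L : ℕ =>
        (Nat.card {z : Fin m → ℤ // (∀ i, |z i| ≤ (L : ℤ)) ∧ P z} : ℝ) / (2 * L : ℝ) ^ m) atTop ≤
      #A / (Q : ℝ) ^ m := by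
  set g : ℕ → ℝ := fun L => #A * (1 / Q + (1 / 2) / L) ^ m
  have hg : Tendsto g atTop (𝓝 (#A / (Q : ℝ) ^ m)) := by
    have := ((tendsto_const_nhds (x := (1 / Q : ℝ))).add
      (tendsto_const_div_atTop_nhds_zero_nat (1 / 2 : ℝ))).pow m |>.const_mul (#A : ℝ)
    simpa [g, div_eq_mul_inv] using this
  have hle : ∀ᶠ L : ℕ in atTop,
      (Nat.card {z : Fin m → ℤ // (∀ i, |z i| ≤ (L : ℤ)) ∧ P z} : ℝ) / (2 * L : ℝ) ^ m ≤ g L := by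
    filter_upwards [eventually_ge_atTop 1] with L hL
    have hL : (0 : ℝ) < L := by exact_mod_cast hL
    have hQ : (0 : ℝ) < Q := by exact_mod_cast Nat.pos_of_neZero Q
    have hK : ((2 * L / Q : ℕ) : ℝ) + 1 ≤ 2 * L * (1 / Q + (1 / 2) / L) := by
      have : ((2 * L / Q : ℕ) : ℝ) ≤ (2 * L : ℕ) / Q := Nat.cast_div_le
      calc ((2 * L / Q : ℕ) : ℝ) + 1 ≤ 2 * L / Q + 1 := by push_cast at this; linarith
        _ = 2 * L * (1 / Q + (1 / 2) / L) := by field_simp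
    rw [div_le_iff₀ (by positivity)]
    calc (Nat.card {z : Fin m → ℤ // (∀ i, |z i| ≤ (L : ℤ)) ∧ P z} : ℝ)
        ≤ #A * (((2 * L / Q : ℕ) : ℝ) + 1) ^ m := by
          exact_mod_cast card_cube_le_of_residues_mem A P hP L
      _ ≤ #A * (2 * L * (1 / Q + (1 / 2) / L)) ^ m := by gcongr
      _ = g L * (2 * L) ^ m := by rw [mul_pow]; ring
  have hcobdd : IsCoboundedUnder (· ≤ ·) atTop (fun L : ℕ =>
      (Nat.card {z : Fin m → ℤ // (∀ i, |z i| ≤ (L : ℤ)) ∧ P z} : ℝ) / (2 * L : ℝ) ^ m) :=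
    isBoundedUnder_of_eventually_ge (a := 0) (.of_forall fun _ => by positivity)
      |>.isCoboundedUnder_le
  exact (limsup_le_limsup hle hcobdd hg.isBoundedUnder_le).trans_eq hg.limsup_eq

theorem card_filter_prodEquivPi_notMem {ι : Type*} [Fintype ι] (a : ι → ℕ)
    [NeZero (∏ i, a i)] [∀ i, NeZero (a i)] (ha : Pairwise fun i j => (a i).Coprime (a j)) (m : ℕ)
    (W : ∀ i, Finset (Fin m → ZMod (a i))) :
    #{r : Fin m → ZMod (∏ i, a i) | ∀ i, (fun j => ZMod.prodEquivPi a ha (r j) i) ∉ W i} =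
      ∏ i, #(W i)ᶜ := by
  rw [← Fintype.card_piFinset]
  refine card_equiv ((Equiv.piCongrRight fun _ => (ZMod.prodEquivPi a ha).toEquiv).trans
    (Equiv.piComm _)) fun r => ?_
  simp only [mem_filter, mem_univ, true_and, Fintype.mem_piFinset, mem_compl]
  rfl

theorem intCast_ne_of_gcd_sub_eq_one {m p : ℕ} (hp : p ≠ 1) {z x : Fin m → ℤ}
    (h : univ.gcd (fun i => z i - x i) = 1) :
    (fun i => (z i : ZMod p)) ≠ fun i => (x i : ZMod p) := by
  intro hzx
  have hdvd : (p : ℤ) ∣ univ.gcd (fun i => z i - x i) := dvd_gcd fun i _ =>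
    (ZMod.intCast_eq_intCast_iff_dvd_sub _ _ _).1 (congrFun hzx i).symm
  rw [h] at hdvd
  exact hp (by exact_mod_cast Int.eq_one_of_dvd_one (Int.natCast_nonneg p) hdvd)

theorem prod_card_compl_div_prod_pow {ι : Type*} [Fintype ι] (a : ι → ℕ) [∀ i, NeZero (a i)]
    (m : ℕ) (W : ∀ i, Finset (Fin m → ZMod (a i))) :
    ((∏ i, #(W i)ᶜ : ℕ) : ℝ) / ((∏ i, a i : ℕ) : ℝ) ^ m =
      ∏ i, (1 - (#(W i) : ℝ) / (a i : ℝ) ^ m) := by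
  push_cast
  rw [← prod_pow, ← prod_div_distrib]
  refine prod_congr rfl fun i _ => ?_
  have hcard : Fintype.card (Fin m → ZMod (a i)) = a i ^ m := by simp
  have ha : (0 : ℝ) < a i := by exact_mod_cast Nat.pos_of_neZero (a i)
  rw [card_compl, hcard, Nat.cast_sub ((card_le_univ _).trans_eq hcard)]
  field_simp
  push_cast
  ring

theorem stmt16_general (m : ℕ) (S : Finset (Fin m → ℤ)) (P : ℕ) :
    Filter.limsup
      (fun L : ℕ =>
        (Nat.card {z : Fin m → ℤ // (∀ i, |z i| ≤ (L : ℤ)) ∧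
            ∀ x ∈ S, Finset.univ.gcd (fun i => z i - x i) = 1} : ℝ) /
          ((2 * L : ℝ)) ^ m)
      Filter.atTop ≤
    ∏ p ∈ (Finset.range (P + 1)).filter Nat.Prime,
      (1 - ((S.image (fun z : Fin m → ℤ => fun i => ((z i : ZMod p)))).card : ℝ) /
        (p : ℝ) ^ m) := by
  set T := (range (P + 1)).filter Nat.Prime
  have hT : ∀ p : T, (p : ℕ).Prime := fun p => (mem_filter.1 p.2).2
  have hcop : Pairwise fun p q : T => (p : ℕ).Coprime q := fun p q hpq =>
    (Nat.coprime_primes (hT p) (hT q)).2 (Subtype.coe_injective.ne hpq)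
  have : ∀ p : T, NeZero (p : ℕ) := fun p => ⟨(hT p).ne_zero⟩
  have : NeZero (∏ p : T, (p : ℕ)) := ⟨prod_ne_zero_iff.2 fun p _ => (hT p).ne_zero⟩
  set W : ∀ p : T, Finset (Fin m → ZMod p) := fun p => S.image fun z i => (z i : ZMod p)
  refine (limsup_card_cube_div_le_of_residues_mem
    {r | ∀ p, (fun j => ZMod.prodEquivPi _ hcop (r j) p) ∉ W p} _ fun z hz => ?_).trans_eq ?_
  · simp only [mem_filter, mem_univ, true_and, map_intCast, W, mem_image, not_exists, not_and]
    exact fun p x hx => (intCast_ne_of_gcd_sub_eq_one (hT p).ne_one (hz x hx)).symm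
  · rw [card_filter_prodEquivPi_notMem, prod_card_compl_div_prod_pow,
      ← prod_coe_sort T fun p => 1 - (#(S.image fun z i => (z i : ZMod p)) : ℝ) / (p : ℝ) ^ m]

/-- The upper density of `V(S)` along cubes `[−L,L]^m` is at most
`∏_{p ≤ P} (1 − s(p)/p^m)` for every bound `P`. -/
theorem stmt16 (m : ℕ) (hm : 2 ≤ m) (S : Finset (Fin m → ℤ)) (P : ℕ) :
    Filter.limsup
      (fun L : ℕ =>
        (Nat.card {z : Fin m → ℤ // (∀ i, |z i| ≤ (L : ℤ)) ∧
            ∀ x ∈ S, Finset.univ.gcd (fun i => z i - x i) = 1} : ℝ) /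
          ((2 * L : ℝ)) ^ m)
      Filter.atTop ≤
    ∏ p ∈ (Finset.range (P + 1)).filter Nat.Prime,
      (1 - ((S.image (fun z : Fin m → ℤ => fun i => ((z i : ZMod p)))).card : ℝ) /
        (p : ℝ) ^ m) :=
  stmt16_general m S P
end

section
/- Let 𝒪 be the ring of integers of a number field that is a PID, m ≥ 2, S ⊆ 𝒪^m finite. If for every nonzero prime ideal 𝔭, π_𝔭(S) ≠ (𝒪/𝔭)^m, then V(S) is nonempty; indeed for any finite set E of primes, there exist infinitely many z ∈ 𝒪^m such that for all s ∈ S and all 𝔭 ∈ E, z − s is not componentwise in 𝔭. -/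
open Ideal

section Aux
variable {R : Type*} [CommRing R]

lemma my_crt (T : Finset (Ideal R)) (hT : ∀ 𝔭 ∈ T, 𝔭.IsMaximal) (t : Ideal R → R) :
    ∃ x : R, ∀ 𝔭 ∈ T, x - t 𝔭 ∈ 𝔭 := by
  have hF : Finite {𝔭 // 𝔭 ∈ T} := inferInstance
  have hco : Pairwise fun (i j : {𝔭 // 𝔭 ∈ T}) => IsCoprime i.1 j.1 := by
    intro i j hij
    exact Ideal.isCoprime_iff_sup_eq.mpr (Ideal.IsMaximal.coprime_of_ne (hT _ i.2) (hT _ j.2)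
      (fun h => hij (Subtype.ext h)))
  obtain ⟨x, hx⟩ := Ideal.pi_quotient_surjective hco
    (fun i : {𝔭 // 𝔭 ∈ T} => Ideal.Quotient.mk i.1 (t i.1))
  refine ⟨x, fun 𝔭 h𝔭 => ?_⟩
  have := hx ⟨𝔭, h𝔭⟩
  exact Ideal.Quotient.eq.mp this

lemma my_finite_primes [IsDedekindDomain R] {x : R} (hx : x ≠ 0) :
    {𝔭 : Ideal R | 𝔭.IsPrime ∧ x ∈ 𝔭}.Finite := by
  have hsp : Ideal.span {x} ≠ 0 := by
    simpa [Ideal.span_singleton_eq_bot] using hx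
  have h := Ideal.finite_factors hsp
  refine Set.Finite.subset (h.image (fun v => v.asIdeal)) ?_
  rintro 𝔭 ⟨hp, hxp⟩
  have hb : 𝔭 ≠ ⊥ := by
    rintro rfl; exact hx (Ideal.mem_bot.mp hxp)
  exact ⟨⟨𝔭, hp, hb⟩, Ideal.dvd_iff_le.mpr (Ideal.span_le.mpr (by simpa using hxp)), rfl⟩

lemma my_avoid {𝔭 : Ideal R} {n : ℕ} (hN : ((Nat.factorial n : ℕ) : R) ∉ 𝔭)
    (T : Finset R) (hT : T.card ≤ n) : ∃ β : R, ∀ t ∈ T, β - t ∉ 𝔭 := by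
  by_contra h
  push_neg at h
  have hsub : (Set.univ : Set (R ⧸ 𝔭)) ⊆ (Ideal.Quotient.mk 𝔭) '' T := by
    intro q _
    obtain ⟨β, rfl⟩ := Ideal.Quotient.mk_surjective q
    obtain ⟨t, htT, ht⟩ := h β
    exact ⟨t, htT, (Ideal.Quotient.eq.mpr (by simpa using (𝔭.neg_mem ht))).symm ▸ rfl⟩
  have hfinU : (Set.univ : Set (R ⧸ 𝔭)).Finite :=
    Set.Finite.subset (T.finite_toSet.image _) hsub
  have hfin : Finite (R ⧸ 𝔭) := Set.finite_univ_iff.mp hfinU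
  have hcard : Nat.card (R ⧸ 𝔭) ≤ n := by
    rw [← Set.ncard_univ]
    calc (Set.univ : Set (R ⧸ 𝔭)).ncard ≤ ((Ideal.Quotient.mk 𝔭) '' T).ncard :=
          Set.ncard_le_ncard hsub (T.finite_toSet.image _)
      _ ≤ (T : Set R).ncard := Set.ncard_image_le T.finite_toSet
      _ = T.card := Set.ncard_coe_finset T
      _ ≤ n := hT
  have hninj : ¬ Function.Injective (fun k : Fin (n + 1) => ((k : ℕ) : R ⧸ 𝔭)) := by
    intro hinj
    have := Nat.card_le_card_of_injective _ hinj
    simp [Nat.card_eq_fintype_card] at this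
    omega
  obtain ⟨k, l, heq, hne⟩ := Function.not_injective_iff.mp hninj
  have key : ∀ k l : Fin (n + 1), k < l →
      ((k : ℕ) : R ⧸ 𝔭) = ((l : ℕ) : R ⧸ 𝔭) → False := by
    intro k l hkl heq
    have hmem : (((l : ℕ) - (k : ℕ) : ℕ) : R) ∈ 𝔭 := by
      have h0 : ((((l : ℕ) - (k : ℕ) : ℕ) : R ⧸ 𝔭)) = 0 := by
        rw [Nat.cast_sub (le_of_lt hkl), ← heq]
        ring
      rwa [show ((((l : ℕ) - (k : ℕ) : ℕ)) : R ⧸ 𝔭)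
          = Ideal.Quotient.mk 𝔭 ((((l : ℕ) - (k : ℕ) : ℕ)) : R) from (map_natCast _ _).symm,
        Ideal.Quotient.eq_zero_iff_mem] at h0
    have hdvd : ((l : ℕ) - (k : ℕ)) ∣ Nat.factorial n := by
      refine Nat.dvd_factorial (by omega) (by have := l.isLt; omega)
    obtain ⟨d, hd⟩ := hdvd
    refine hN ?_
    rw [hd]
    push_cast
    exact Ideal.mul_mem_right _ _ hmem
  rcases hne.lt_or_gt with hlt | hlt
  · exact key _ _ hlt heq
  · exact key _ _ hlt heq.symm

end Aux

theorem my_main {R : Type*} [CommRing R] [IsDedekindDomain R] [CharZero R]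
    (m : ℕ) (hm : 2 ≤ m)
    (S : Finset (Fin m → R))
    (hproper : ∀ 𝔭 : Ideal R, 𝔭.IsPrime → 𝔭 ≠ ⊥ →
      ∃ w : Fin m → (R ⧸ 𝔭),
        ∀ s ∈ S, (fun i => Ideal.Quotient.mk 𝔭 (s i)) ≠ w) :
    {z : Fin m → R |
        ∀ s ∈ S, Ideal.span (Set.range fun i => z i - s i) = ⊤}.Nonempty ∧
      ∀ E : Finset (Ideal R),
        (∀ 𝔭 ∈ E, 𝔭.IsPrime ∧ 𝔭 ≠ ⊥) →
        {z : Fin m → R |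
          ∀ s ∈ S, ∀ 𝔭 ∈ E, ∃ i, z i - s i ∉ 𝔭}.Infinite := by
  classical
  have hinfR : Infinite R := Infinite.of_injective (fun n : ℕ => (n : R)) Nat.cast_injective
  have h0 : 0 < m := by omega
  have h1 : 1 < m := by omega
  set i0 : Fin m := ⟨0, h0⟩ with hi0def
  set i1 : Fin m := ⟨1, h1⟩ with hi1def
  have hi01 : i1 ≠ i0 := by simp [hi0def, hi1def, Fin.ext_iff]
  -- total lifts of the avoided residue vectors
  have hlift : ∀ 𝔭 : Ideal R, ∃ r : Fin m → R,
      (𝔭.IsPrime → 𝔭 ≠ ⊥ → ∀ s ∈ S, ∃ i, s i - r i ∉ 𝔭) := by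
    intro 𝔭
    by_cases h : 𝔭.IsPrime ∧ 𝔭 ≠ ⊥
    · obtain ⟨w, hw⟩ := hproper 𝔭 h.1 h.2
      choose r hrr using fun i => Ideal.Quotient.mk_surjective (w i)
      refine ⟨r, fun _ _ s hs => ?_⟩
      by_contra hcon
      push_neg at hcon
      exact hw s hs (funext fun i => by rw [← hrr i]; exact Ideal.Quotient.eq.mpr (hcon i))
    · exact ⟨0, fun hp hb => absurd ⟨hp, hb⟩ h⟩
  choose r hr using hlift
  have key : ∀ (𝔭 : Ideal R), 𝔭.IsPrime → 𝔭 ≠ ⊥ → ∀ (z : Fin m → R),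
      (∀ i, z i - r 𝔭 i ∈ 𝔭) → ∀ s ∈ S, ∃ i, z i - s i ∉ 𝔭 := by
    intro 𝔭 hp hbot z hz s hs
    obtain ⟨i, hi⟩ := hr 𝔭 hp hbot s hs
    refine ⟨i, fun hmem => hi ?_⟩
    have heq : s i - r 𝔭 i = (z i - r 𝔭 i) - (z i - s i) := by ring
    rw [heq]; exact 𝔭.sub_mem (hz i) hmem
  -- product of nonzero elements of a finite family of nonzero ideals
  have hMex : ∀ T : Finset (Ideal R), (∀ 𝔭 ∈ T, 𝔭 ≠ ⊥) →
      ∃ M : R, M ≠ 0 ∧ ∀ 𝔭 ∈ T, M ∈ 𝔭 := by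
    intro T hT
    have hg : ∀ 𝔭 : Ideal R, ∃ g : R, 𝔭 ∈ T → (g ∈ 𝔭 ∧ g ≠ 0) := by
      intro 𝔭
      by_cases h : 𝔭 ∈ T
      · obtain ⟨b, hb, hb0⟩ := Submodule.exists_mem_ne_zero_of_ne_bot (hT 𝔭 h)
        exact ⟨b, fun _ => ⟨hb, hb0⟩⟩
      · exact ⟨1, fun hc => absurd hc h⟩
    choose g hg using hg
    refine ⟨∏ 𝔭 ∈ T, g 𝔭, Finset.prod_ne_zero_iff.mpr (fun 𝔭 h => (hg 𝔭 h).2),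
      fun 𝔭 h => ?_⟩
    obtain ⟨d, hd⟩ := Finset.dvd_prod_of_mem g h
    rw [hd]; exact Ideal.mul_mem_right _ _ (hg 𝔭 h).1
  -- CRT per coordinate
  have hxT : ∀ (T : Finset (Ideal R)), (∀ 𝔭 ∈ T, 𝔭.IsMaximal) →
      ∀ (t : Ideal R → Fin m → R), ∃ x : Fin m → R, ∀ 𝔭 ∈ T, ∀ i, x i - t 𝔭 i ∈ 𝔭 := by
    intro T hT t
    choose x hx using fun i : Fin m => my_crt T hT (fun 𝔭 => t 𝔭 i)
    exact ⟨x, fun 𝔭 h i => hx i 𝔭 h⟩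
  constructor
  · -- Part 1 : nonemptiness
    set n := S.card with hndef
    set N : R := ((Nat.factorial n : ℕ) : R) with hNdef
    have hN0 : N ≠ 0 := Nat.cast_ne_zero.mpr (Nat.factorial_ne_zero n)
    have hPfin := my_finite_primes (R := R) hN0
    set P : Finset (Ideal R) := hPfin.toFinset with hPdef
    have hPmem : ∀ 𝔭 : Ideal R, 𝔭 ∈ P ↔ (𝔭.IsPrime ∧ N ∈ 𝔭) := fun 𝔭 => hPfin.mem_toFinset
    have hPbot : ∀ 𝔭 ∈ P, 𝔭 ≠ ⊥ := by
      intro 𝔭 h hbot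
      exact hN0 (Ideal.mem_bot.mp (hbot ▸ ((hPmem 𝔭).mp h).2))
    have hPmax : ∀ 𝔭 ∈ P, 𝔭.IsMaximal :=
      fun 𝔭 h => ((hPmem 𝔭).mp h).1.isMaximal (hPbot 𝔭 h)
    obtain ⟨x, hx⟩ := hxT P hPmax r
    obtain ⟨M, hM0, hM⟩ := hMex P hPbot
    have hinj : Function.Injective (fun c : R => x i0 + M * c) := by
      intro c c' h
      exact mul_left_cancel₀ hM0 (add_left_cancel h)
    have hfinpre : ((fun c : R => x i0 + M * c) ⁻¹'
        ((S.image (fun s => s i0)) : Finset R)).Finite :=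
      Set.Finite.preimage hinj.injOn (Finset.finite_toSet _)
    obtain ⟨c, hc⟩ := hfinpre.infinite_compl.nonempty
    set a : R := x i0 + M * c with hadef
    have ha : ∀ s ∈ S, a - s i0 ≠ 0 := by
      intro s hs h
      refine hc ?_
      have heq : a = s i0 := sub_eq_zero.mp h
      exact Set.mem_preimage.mpr
        (Finset.mem_coe.mpr (Finset.mem_image.mpr ⟨s, hs, heq.symm⟩))
    have hQfin : {𝔭 : Ideal R | 𝔭.IsPrime ∧ 𝔭 ∉ P ∧ ∃ s ∈ S, a - s i0 ∈ 𝔭}.Finite := by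
      refine Set.Finite.subset
        (Set.Finite.biUnion S.finite_toSet (fun s hs => my_finite_primes (ha s hs))) ?_
      rintro 𝔭 ⟨hp, -, s, hs, hmem⟩
      exact Set.mem_biUnion hs ⟨hp, hmem⟩
    set Q : Finset (Ideal R) := hQfin.toFinset with hQdef
    have hQmem : ∀ 𝔭 : Ideal R,
        𝔭 ∈ Q ↔ (𝔭.IsPrime ∧ 𝔭 ∉ P ∧ ∃ s ∈ S, a - s i0 ∈ 𝔭) :=
      fun 𝔭 => hQfin.mem_toFinset
    have hQbot : ∀ 𝔭 ∈ Q, 𝔭 ≠ ⊥ := by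
      intro 𝔭 h hbot
      obtain ⟨-, -, s, hs, hmem⟩ := (hQmem 𝔭).mp h
      exact ha s hs (Ideal.mem_bot.mp (hbot ▸ hmem))
    have hQmax : ∀ 𝔭 ∈ Q, 𝔭.IsMaximal :=
      fun 𝔭 h => ((hQmem 𝔭).mp h).1.isMaximal (hQbot 𝔭 h)
    have hQN : ∀ 𝔭 ∈ Q, N ∉ 𝔭 := by
      intro 𝔭 h hmem
      exact ((hQmem 𝔭).mp h).2.1 ((hPmem 𝔭).mpr ⟨((hQmem 𝔭).mp h).1, hmem⟩)
    have hβex : ∀ 𝔭 : Ideal R, ∃ β : R, 𝔭 ∈ Q → ∀ s ∈ S, β - s i1 ∉ 𝔭 := by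
      intro 𝔭
      by_cases h : 𝔭 ∈ Q
      · obtain ⟨β, hβ⟩ := my_avoid (hQN 𝔭 h) (S.image (fun s => s i1))
          Finset.card_image_le
        exact ⟨β, fun _ s hs => hβ _ (Finset.mem_image_of_mem _ hs)⟩
      · exact ⟨0, fun hc => absurd hc h⟩
    choose β hβ using hβex
    have hPQmax : ∀ 𝔭 ∈ P ∪ Q, 𝔭.IsMaximal := by
      intro 𝔭 h
      rcases Finset.mem_union.mp h with h | h
      exacts [hPmax 𝔭 h, hQmax 𝔭 h]
    obtain ⟨b, hb⟩ := my_crt (P ∪ Q) hPQmax (fun 𝔭 => if 𝔭 ∈ P then r 𝔭 i1 else β 𝔭)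
    set z : Fin m → R := fun i => if i = i0 then a else if i = i1 then b else x i with hzdef
    refine ⟨z, ?_⟩
    simp only [Set.mem_setOf_eq]
    intro s hs
    by_contra hne
    obtain ⟨𝔭, hmax, hle⟩ := Ideal.exists_le_maximal _ hne
    have hall : ∀ i, z i - s i ∈ 𝔭 := fun i => hle (Ideal.subset_span ⟨i, rfl⟩)
    have hz0 : z i0 = a := by simp [hzdef]
    have hz1 : z i1 = b := by simp [hzdef, hi01]
    by_cases hPcase : 𝔭 ∈ P
    · have hzr : ∀ i, z i - r 𝔭 i ∈ 𝔭 := by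
        intro i
        by_cases hi0 : i = i0
        · rw [hi0, hz0]
          have heq : a - r 𝔭 i0 = (x i0 - r 𝔭 i0) + M * c := by rw [hadef]; ring
          rw [heq]
          exact 𝔭.add_mem (hx 𝔭 hPcase i0) (Ideal.mul_mem_right _ _ (hM 𝔭 hPcase))
        · by_cases hi1 : i = i1
          · rw [hi1, hz1]
            have hcrt := hb 𝔭 (Finset.mem_union_left _ hPcase)
            rwa [if_pos hPcase] at hcrt
          · have hzi : z i = x i := by simp [hzdef, hi0, hi1]
            rw [hzi]
            exact hx 𝔭 hPcase i
      have hbot : 𝔭 ≠ ⊥ := by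
        intro hbot
        exact hN0 (Ideal.mem_bot.mp (hbot ▸ ((hPmem 𝔭).mp hPcase).2))
      obtain ⟨j, hj⟩ := key 𝔭 hmax.isPrime hbot z hzr s hs
      exact hj (hall j)
    · have hmem0 : a - s i0 ∈ 𝔭 := by
        have hh := hall i0
        rwa [hz0] at hh
      have h𝔭Q : 𝔭 ∈ Q := (hQmem 𝔭).mpr ⟨hmax.isPrime, hPcase, s, hs, hmem0⟩
      have hb𝔭 : b - β 𝔭 ∈ 𝔭 := by
        have hh := hb 𝔭 (Finset.mem_union_right _ h𝔭Q)
        rwa [if_neg hPcase] at hh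
      have hmem1 : b - s i1 ∈ 𝔭 := by
        have hh := hall i1
        rwa [hz1] at hh
      refine hβ 𝔭 h𝔭Q s hs ?_
      have heq : β 𝔭 - s i1 = (b - s i1) - (b - β 𝔭) := by ring
      rw [heq]
      exact 𝔭.sub_mem hmem1 hb𝔭
  · -- Part 2 : finitely many primes, infinitely many z
    intro E hE
    have hEmax : ∀ 𝔭 ∈ E, 𝔭.IsMaximal := fun 𝔭 h => (hE 𝔭 h).1.isMaximal (hE 𝔭 h).2
    obtain ⟨x, hx⟩ := hxT E hEmax r
    obtain ⟨M, hM0, hM⟩ := hMex E (fun 𝔭 h => (hE 𝔭 h).2)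
    refine Set.infinite_of_injective_forall_mem
      (f := fun c : R => fun i => x i + if i = i0 then M * c else 0) ?_ ?_
    · intro c c' h
      have hh := congrFun h i0
      simp only [if_pos rfl] at hh
      exact mul_left_cancel₀ hM0 (add_left_cancel hh)
    · intro c
      simp only [Set.mem_setOf_eq]
      intro s hs 𝔭 h𝔭
      refine key 𝔭 (hE 𝔭 h𝔭).1 (hE 𝔭 h𝔭).2 _ ?_ s hs
      intro i
      have heq : (x i + if i = i0 then M * c else 0) - r 𝔭 i
          = (x i - r 𝔭 i) + (if i = i0 then M * c else 0) := by ring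
      rw [heq]
      refine 𝔭.add_mem (hx 𝔭 h𝔭 i) ?_
      split
      · exact Ideal.mul_mem_right _ _ (hM 𝔭 h𝔭)
      · exact 𝔭.zero_mem

/-- If `𝒪` is a PID and for every nonzero prime ideal `𝔭` the reduction `π_𝔭(S)` is
a proper subset of `(𝒪/𝔭)^m`, then `V(S)` is nonempty; moreover for every finite
set `E` of primes, there are infinitely many `z` such that for all `s ∈ S` and
`𝔭 ∈ E`, `z − s` is not componentwise in `𝔭`. -/
theorem stmt19 (K : Type*) [Field K] [NumberField K]
    (hPID : IsPrincipalIdealRing (NumberField.RingOfIntegers K))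
    (m : ℕ) (hm : 2 ≤ m)
    (S : Finset (Fin m → NumberField.RingOfIntegers K))
    (hproper : ∀ 𝔭 : Ideal (NumberField.RingOfIntegers K), 𝔭.IsPrime → 𝔭 ≠ ⊥ →
      ∃ w : Fin m → (NumberField.RingOfIntegers K ⧸ 𝔭),
        ∀ s ∈ S, (fun i => Ideal.Quotient.mk 𝔭 (s i)) ≠ w) :
    {z : Fin m → NumberField.RingOfIntegers K |
        ∀ s ∈ S, Ideal.span (Set.range fun i => z i - s i) = ⊤}.Nonempty ∧
      ∀ E : Finset (Ideal (NumberField.RingOfIntegers K)),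
        (∀ 𝔭 ∈ E, 𝔭.IsPrime ∧ 𝔭 ≠ ⊥) →
        {z : Fin m → NumberField.RingOfIntegers K |
          ∀ s ∈ S, ∀ 𝔭 ∈ E, ∃ i, z i - s i ∉ 𝔭}.Infinite :=
  my_main m hm S hproper
end
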